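/- arXiv:2406.00774 — 2 statements merged into one kernel-verified Lean document; each statement's English description precedes it below -/
import Mathlib

section
/- Let p, s ∈ (1,∞), Λ > 0, M > 0 and μ ∈ (0,1]. There exists a constant C̃ > 0, depending only on p, s, Λ, M and μ, with the following property: whenever A ∈ ℂ^{d×d}, b, c ∈ ℂ^d and V ≥ 0 real satisfy |⟨Aξ,σ⟩| ≤ Λ|ξ||σ| for all ξ, σ ∈ ℂ^d, |b − c| ≤ M√V, and Γ_p^{(A,b,c,V)}(ξ) ≥ μ(|ξ|² + V) for all ξ ∈ ℂ^d, then |b + 𝒥_s c| ≤ C̃ √V. -/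
/-!
Componentwise `𝒥_p z = (p - 1) Re z + i Im z`, so for `p ≥ 1` the map `𝒥_p` has norm at most `p`
and `z ↦ z + 𝒥_p z` does not decrease norms. Since `Γ ≥ μ(|ξ|² + V) ≥ 0`, testing it at
`ξ = -β / (2Λp)` with `β = b + 𝒥_p c` gives `|β|² ≤ 4ΛpV`. Then `|c| ≤ |c + 𝒥_p c| = |β - (b - c)|`
is `O(√V)`, and so is `b + 𝒥_s c = (b - c) + (c + 𝒥_s c)`.
-/

open scoped ComplexConjugate

/-- The ℝ-linear operator `𝒥_p ξ = (p/2)(ξ + (1 − 2/p)·conj ξ)` on `ℂ^d`. -/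
noncomputable def Jmap (p : ℝ) {d : ℕ} (ξ : EuclideanSpace ℂ (Fin d)) :
    EuclideanSpace ℂ (Fin d) :=
  WithLp.toLp 2 (fun i => (p / 2 : ℂ) * (ξ i + ((1 - 2 / p : ℝ) : ℂ) * conj (ξ i)))

/-- The Hermitian inner product `⟨x,y⟩ = ∑ x i * conj (y i)`, linear in the first variable. -/
noncomputable def hip {d : ℕ} (x y : EuclideanSpace ℂ (Fin d)) : ℂ :=
  @inner ℂ _ _ y x

/-- A matrix acting on `ℂ^d`. -/
noncomputable def mulVecE {d : ℕ} (A : Matrix (Fin d) (Fin d) ℂ)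
    (ξ : EuclideanSpace ℂ (Fin d)) : EuclideanSpace ℂ (Fin d) :=
  WithLp.toLp 2 (fun i => A.mulVec (fun j => ξ j) i)

/-- `Γ_p^{(A,b,c,V)}(ξ) = Re⟨Aξ, 𝒥_p ξ⟩ + Re⟨b + 𝒥_p c, ξ⟩ + V`. -/
noncomputable def Gamma (p : ℝ) {d : ℕ} (A : Matrix (Fin d) (Fin d) ℂ)
    (b c : EuclideanSpace ℂ (Fin d)) (V : ℝ) (ξ : EuclideanSpace ℂ (Fin d)) : ℝ :=
  (hip (mulVecE A ξ) (Jmap p ξ)).re + (hip (b + Jmap p c) ξ).re + V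

theorem EuclideanSpace.norm_le_mul_of_forall_norm_le {𝕜 ι : Type*} [RCLike 𝕜] [Fintype ι]
    {x y : EuclideanSpace 𝕜 ι} {K : ℝ} (hK : 0 ≤ K) (h : ∀ i, ‖x i‖ ≤ K * ‖y i‖) :
    ‖x‖ ≤ K * ‖y‖ := by
  rw [← pow_le_pow_iff_left₀ (norm_nonneg _) (by positivity) two_ne_zero, mul_pow,
    EuclideanSpace.norm_sq_eq, EuclideanSpace.norm_sq_eq, Finset.mul_sum]
  gcongr with i
  rw [← mul_pow]
  exact pow_le_pow_left₀ (norm_nonneg _) (h i) 2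

section Jmap

variable {p : ℝ} {d : ℕ} (ξ : EuclideanSpace ℂ (Fin d)) (i : Fin d)

theorem Jmap_apply (hp : p ≠ 0) : Jmap p ξ i = ⟨(p - 1) * (ξ i).re, (ξ i).im⟩ := by
  apply Complex.ext <;>
  · simp only [Jmap, PiLp.toLp_apply, Complex.mul_re, Complex.mul_im, Complex.add_re,
      Complex.add_im, Complex.ofReal_re, Complex.ofReal_im, Complex.conj_re, Complex.conj_im,
      Complex.div_ofNat_re, Complex.div_ofNat_im]
    field_simp
    ring

theorem norm_Jmap_le (hp : 1 ≤ p) : ‖Jmap p ξ‖ ≤ p * ‖ξ‖ := by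
  refine EuclideanSpace.norm_le_mul_of_forall_norm_le (by linarith) fun i => ?_
  rw [← pow_le_pow_iff_left₀ (norm_nonneg _) (by positivity) two_ne_zero, mul_pow,
    Complex.sq_norm, Complex.sq_norm, Jmap_apply ξ i (by positivity), Complex.normSq_mk,
    Complex.normSq_apply]
  nlinarith [mul_nonneg (by linarith : 0 ≤ 2 * p - 1) (mul_self_nonneg (ξ i).re),
    mul_nonneg (by nlinarith : 0 ≤ p ^ 2 - 1) (mul_self_nonneg (ξ i).im)]

theorem norm_le_norm_add_Jmap (hp : 1 ≤ p) : ‖ξ‖ ≤ ‖ξ + Jmap p ξ‖ := by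
  rw [← one_mul ‖ξ + Jmap p ξ‖]
  refine EuclideanSpace.norm_le_mul_of_forall_norm_le zero_le_one fun i => ?_
  rw [one_mul, ← pow_le_pow_iff_left₀ (norm_nonneg _) (norm_nonneg _) two_ne_zero,
    Complex.sq_norm, Complex.sq_norm, PiLp.add_apply, Jmap_apply ξ i (by positivity),
    Complex.normSq_apply, Complex.normSq_apply]
  simp only [Complex.add_re, Complex.add_im]
  nlinarith [mul_nonneg (by nlinarith : 0 ≤ p ^ 2 - 1) (mul_self_nonneg (ξ i).re),
    mul_self_nonneg (ξ i).im]

theorem norm_add_Jmap_le (hp : 1 ≤ p) : ‖ξ + Jmap p ξ‖ ≤ (1 + p) * ‖ξ‖ := by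
  linarith [norm_add_le ξ (Jmap p ξ), norm_Jmap_le ξ hp]

end Jmap

theorem re_hip_smul_self {d : ℕ} (β : EuclideanSpace ℂ (Fin d)) (r : ℝ) :
    (hip β ((r : ℂ) • β)).re = r * ‖β‖ ^ 2 := by
  rw [hip, inner_smul_left, Complex.conj_ofReal, Complex.re_ofReal_mul]
  exact congrArg (r * ·) (inner_self_eq_norm_sq (𝕜 := ℂ) β)

section Gamma

variable {p Λ V : ℝ} {d : ℕ} {A : Matrix (Fin d) (Fin d) ℂ} {b c : EuclideanSpace ℂ (Fin d)}

theorem re_hip_mulVecE_Jmap_le (hp : 1 ≤ p) (hΛ : 0 ≤ Λ)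
    (hA : ∀ ξ σ : EuclideanSpace ℂ (Fin d), ‖hip (mulVecE A ξ) σ‖ ≤ Λ * ‖ξ‖ * ‖σ‖)
    (ξ : EuclideanSpace ℂ (Fin d)) :
    (hip (mulVecE A ξ) (Jmap p ξ)).re ≤ Λ * p * ‖ξ‖ ^ 2 :=
  calc (hip (mulVecE A ξ) (Jmap p ξ)).re
      ≤ Λ * ‖ξ‖ * ‖Jmap p ξ‖ := (Complex.re_le_norm _).trans (hA ξ _)
    _ ≤ Λ * ‖ξ‖ * (p * ‖ξ‖) := by gcongr; exact norm_Jmap_le ξ hp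
    _ = Λ * p * ‖ξ‖ ^ 2 := by ring

theorem norm_add_Jmap_le_of_Gamma_nonneg (hp : 1 ≤ p) (hΛ : 0 < Λ)
    (hA : ∀ ξ σ : EuclideanSpace ℂ (Fin d), ‖hip (mulVecE A ξ) σ‖ ≤ Λ * ‖ξ‖ * ‖σ‖)
    (hΓ : ∀ ξ, 0 ≤ Gamma p A b c V ξ) :
    ‖b + Jmap p c‖ ≤ 2 * √(Λ * p) * √V := by
  set β := b + Jmap p c
  set t := (2 * Λ * p)⁻¹ with ht_def
  have ht : 0 < t := by positivity
  have hΛpt : Λ * p * t = 1 / 2 := by rw [ht_def]; field_simp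
  have hquad : 0 ≤ Λ * p * (t * ‖β‖) ^ 2 - t * ‖β‖ ^ 2 + V := by
    have hξ : ‖((-t : ℝ) : ℂ) • β‖ = t * ‖β‖ := by
      rw [norm_smul, Complex.norm_real, Real.norm_eq_abs, abs_neg, abs_of_pos ht]
    have hAξ := re_hip_mulVecE_Jmap_le hp hΛ.le hA (((-t : ℝ) : ℂ) • β)
    have hΓξ := hΓ (((-t : ℝ) : ℂ) • β)
    rw [hξ] at hAξ
    rw [Gamma, re_hip_smul_self] at hΓξ
    linarith
  have hV : 0 ≤ V := by simpa [Gamma, hip, mulVecE, ← Pi.zero_def] using hΓ 0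
  have hsq : ‖β‖ ^ 2 ≤ (2 * √(Λ * p) * √V) ^ 2 := by
    rw [mul_pow, mul_pow, Real.sq_sqrt (by positivity), Real.sq_sqrt hV]
    have : t * ‖β‖ ^ 2 ≤ 2 * V := by nlinarith
    calc ‖β‖ ^ 2 = (2 * Λ * p) * (t * ‖β‖ ^ 2) := by linear_combination (-2 * ‖β‖ ^ 2) * hΛpt
      _ ≤ (2 * Λ * p) * (2 * V) := by gcongr
      _ = 2 ^ 2 * (Λ * p) * V := by ring
  exact (pow_le_pow_iff_left₀ (norm_nonneg _) (by positivity) two_ne_zero).mp hsq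

end Gamma

theorem stmt3_general (p s Λ M μ : ℝ) (hp : 1 < p) (hs : 1 < s)
    (hΛ : 0 < Λ) (hM : 0 < M) (hμ0 : 0 < μ) :
    ∃ C : ℝ, 0 < C ∧
      ∀ (d : ℕ), 1 ≤ d →
        ∀ (A : Matrix (Fin d) (Fin d) ℂ) (b c : EuclideanSpace ℂ (Fin d)) (V : ℝ),
          0 ≤ V →
          (∀ ξ σ : EuclideanSpace ℂ (Fin d),
            ‖hip (mulVecE A ξ) σ‖ ≤ Λ * ‖ξ‖ * ‖σ‖) →
          ‖b - c‖ ≤ M * Real.sqrt V →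
          (∀ ξ : EuclideanSpace ℂ (Fin d), μ * (‖ξ‖ ^ 2 + V) ≤ Gamma p A b c V ξ) →
          ‖b + Jmap s c‖ ≤ C * Real.sqrt V := by
  set K := 2 * √(Λ * p)
  refine ⟨M + (1 + s) * (K + M), by positivity, fun d _ A b c V hV hA hbc hΓ => ?_⟩
  have hβ : ‖b + Jmap p c‖ ≤ K * √V :=
    norm_add_Jmap_le_of_Gamma_nonneg hp.le hΛ hA fun ξ =>
      le_trans (by positivity) (hΓ ξ)
  have hc : ‖c‖ ≤ (K + M) * √V :=
    calc ‖c‖ ≤ ‖c + Jmap p c‖ := norm_le_norm_add_Jmap c hp.le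
      _ = ‖(b + Jmap p c) - (b - c)‖ := by congr 1; abel
      _ ≤ K * √V + M * √V := (norm_sub_le _ _).trans (add_le_add hβ hbc)
      _ = (K + M) * √V := by ring
  calc ‖b + Jmap s c‖ = ‖(b - c) + (c + Jmap s c)‖ := by congr 1; abel
    _ ≤ M * √V + (1 + s) * ((K + M) * √V) :=
      (norm_add_le _ _).trans (add_le_add hbc <| (norm_add_Jmap_le c hs.le).trans <|
        mul_le_mul_of_nonneg_left hc (by linarith))
    _ = (M + (1 + s) * (K + M)) * √V := by ring

theorem stmt3 (p s Λ M μ : ℝ) (hp : 1 < p) (hs : 1 < s)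
    (hΛ : 0 < Λ) (hM : 0 < M) (hμ0 : 0 < μ) (hμ1 : μ ≤ 1) :
    ∃ C : ℝ, 0 < C ∧
      ∀ (d : ℕ), 1 ≤ d →
        ∀ (A : Matrix (Fin d) (Fin d) ℂ) (b c : EuclideanSpace ℂ (Fin d)) (V : ℝ),
          0 ≤ V →
          (∀ ξ σ : EuclideanSpace ℂ (Fin d),
            ‖hip (mulVecE A ξ) σ‖ ≤ Λ * ‖ξ‖ * ‖σ‖) →
          ‖b - c‖ ≤ M * Real.sqrt V →
          (∀ ξ : EuclideanSpace ℂ (Fin d), μ * (‖ξ‖ ^ 2 + V) ≤ Gamma p A b c V ξ) →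
          ‖b + Jmap s c‖ ≤ C * Real.sqrt V :=
  stmt3_general p s Λ M μ hp hs hΛ hM hμ0
end

section
/- Let p ∈ (1,∞), q = p/(p−1), p* = max{p,q}. Let A ∈ ℂ^{d×d}, b, c ∈ ℂ^d, V ≥ 0 real and μ > 0. If Γ_p^{(A,b,c,V)}(ξ) ≥ μ(|ξ|² + V) for all ξ ∈ ℂ^d, then Γ_q^{(A*, c, b, V)}(ξ) ≥ μ·min{1, (p*−1)^{−2}}·(|ξ|² + V) for all ξ ∈ ℂ^d, where A* denotes the conjugate transpose of A. -/
open scoped ComplexConjugate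

/-!
For conjugate exponents the maps `𝒥_p` and `𝒥_q` are mutually inverse: in real and imaginary
parts `𝒥_r` is `(x, y) ↦ ((r - 1) x, y)`, and `(p - 1)(q - 1) = 1`. Each `𝒥_r` is symmetric for
`Re ⟨·,·⟩`, so `Γ_q^{(A*, c, b, V)}(ξ) = Γ_p^{(A, b, c, V)}(𝒥_q ξ)`. The hypothesis at `𝒥_q ξ`
then gives the claim, since `|𝒥_q ξ|² ≥ min{1, (q - 1)²} |ξ|²` and
`q - 1 = (p - 1)⁻¹ ≥ (p* - 1)⁻¹`.
-/

open scoped Matrix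

lemma Real.HolderConjugate.sub_one_mul_sub_one {p q : ℝ} (h : p.HolderConjugate q) :
    (p - 1) * (q - 1) = 1 := by
  linear_combination h.sub_one_mul_conj

lemma Real.HolderConjugate.min_one_inv_max_sub_one_sq_le {p q : ℝ} (h : p.HolderConjugate q) :
    min 1 ((max p q - 1)⁻¹ ^ 2) ≤ min 1 ((q - 1) ^ 2) := by
  have hpq := h.sub_one_mul_sub_one
  rcases le_total p q with hle | hle
  · rw [max_eq_right hle]
    have : 1 ≤ (q - 1) ^ 2 := by nlinarith [h.sub_one_pos]
    exact le_min (min_le_left _ _) ((min_le_left _ _).trans this)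
  · rw [max_eq_left hle, inv_eq_of_mul_eq_one_right hpq]

section

variable {d : ℕ}

lemma re_hip_eq_sum (x y : EuclideanSpace ℂ (Fin d)) :
    (hip x y).re = ∑ i, ((x i).re * (y i).re + (x i).im * (y i).im) := by
  simp only [hip, PiLp.inner_apply, RCLike.inner_apply, Complex.re_sum, Complex.mul_re,
    Complex.conj_re, Complex.conj_im]
  congr 1 with i
  ring

lemma re_hip_add_left (x y z : EuclideanSpace ℂ (Fin d)) :
    (hip (x + y) z).re = (hip x z).re + (hip y z).re := by
  simp only [hip, inner_add_right, Complex.add_re]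

lemma hip_mulVecE_conjTranspose (A : Matrix (Fin d) (Fin d) ℂ) (x y : EuclideanSpace ℂ (Fin d)) :
    hip (mulVecE Aᴴ x) y = conj (hip (mulVecE A y) x) := by
  change inner ℂ y (Aᴴ.toEuclideanLin x) = conj (inner ℂ x (A.toEuclideanLin y))
  rw [Matrix.toEuclideanLin_conjTranspose_eq_adjoint, LinearMap.adjoint_inner_right,
    inner_conj_symm]

lemma Jmap_apply_re {r : ℝ} (hr : r ≠ 0) (ξ : EuclideanSpace ℂ (Fin d)) (i : Fin d) :
    (Jmap r ξ i).re = (r - 1) * (ξ i).re := by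
  change ((r / 2 : ℂ) * (ξ i + ((1 - 2 / r : ℝ) : ℂ) * conj (ξ i))).re = _
  rw [← Complex.ofReal_ofNat, ← Complex.ofReal_div]
  simp only [Complex.re_ofReal_mul, Complex.add_re, Complex.conj_re]
  field_simp
  ring

lemma Jmap_apply_im {r : ℝ} (hr : r ≠ 0) (ξ : EuclideanSpace ℂ (Fin d)) (i : Fin d) :
    (Jmap r ξ i).im = (ξ i).im := by
  change ((r / 2 : ℂ) * (ξ i + ((1 - 2 / r : ℝ) : ℂ) * conj (ξ i))).im = _
  rw [← Complex.ofReal_ofNat, ← Complex.ofReal_div]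
  simp only [Complex.im_ofReal_mul, Complex.add_im, Complex.conj_im]
  field_simp
  ring

lemma re_hip_Jmap_left {r : ℝ} (hr : r ≠ 0) (x y : EuclideanSpace ℂ (Fin d)) :
    (hip (Jmap r x) y).re = (hip x (Jmap r y)).re := by
  simp only [re_hip_eq_sum, Jmap_apply_re hr, Jmap_apply_im hr]
  congr 1 with i
  ring

lemma Jmap_Jmap {p q : ℝ} (h : p.HolderConjugate q) (ξ : EuclideanSpace ℂ (Fin d)) :
    Jmap p (Jmap q ξ) = ξ := by
  ext i
  apply Complex.ext
  · rw [Jmap_apply_re h.ne_zero, Jmap_apply_re h.symm.ne_zero, ← mul_assoc,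
      h.sub_one_mul_sub_one, one_mul]
  · rw [Jmap_apply_im h.ne_zero, Jmap_apply_im h.symm.ne_zero]

lemma min_one_sub_one_sq_mul_norm_sq_le {r : ℝ} (hr : r ≠ 0) (ξ : EuclideanSpace ℂ (Fin d)) :
    min 1 ((r - 1) ^ 2) * ‖ξ‖ ^ 2 ≤ ‖Jmap r ξ‖ ^ 2 := by
  simp only [EuclideanSpace.norm_sq_eq, Finset.mul_sum, Complex.sq_norm, Complex.normSq_apply,
    Jmap_apply_re hr, Jmap_apply_im hr]
  gcongr with i
  have h1 := min_le_left 1 ((r - 1) ^ 2)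
  have h2 := min_le_right 1 ((r - 1) ^ 2)
  nlinarith [mul_self_nonneg (ξ i).re, mul_self_nonneg (ξ i).im]

lemma Gamma_conjTranspose {p q : ℝ} (h : p.HolderConjugate q) (A : Matrix (Fin d) (Fin d) ℂ)
    (b c : EuclideanSpace ℂ (Fin d)) (V : ℝ) (ξ : EuclideanSpace ℂ (Fin d)) :
    Gamma q Aᴴ c b V ξ = Gamma p A b c V (Jmap q ξ) := by
  simp only [Gamma, re_hip_add_left, hip_mulVecE_conjTranspose, Complex.conj_re, Jmap_Jmap h,
    re_hip_Jmap_left h.symm.ne_zero, re_hip_Jmap_left h.ne_zero]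
  ring

end

theorem stmt8_general (d : ℕ) (p q pstar : ℝ) (hp : 1 < p)
    (hq : q = p / (p - 1)) (hpstar : pstar = max p q)
    (A : Matrix (Fin d) (Fin d) ℂ) (b c : EuclideanSpace ℂ (Fin d))
    (V μ : ℝ) (hV : 0 ≤ V) (hμ : 0 < μ)
    (hΓ : ∀ ξ : EuclideanSpace ℂ (Fin d), μ * (‖ξ‖ ^ 2 + V) ≤ Gamma p A b c V ξ) :
    ∀ ξ : EuclideanSpace ℂ (Fin d),
      μ * min 1 ((pstar - 1)⁻¹ ^ 2) * (‖ξ‖ ^ 2 + V) ≤ Gamma q A.conjTranspose c b V ξ := by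
  intro ξ
  subst hpstar
  have h : p.HolderConjugate q := (Real.holderConjugate_iff_eq_conjExponent hp).2 hq
  set m := min 1 ((max p q - 1)⁻¹ ^ 2)
  have hm : m ≤ min 1 ((q - 1) ^ 2) := h.min_one_inv_max_sub_one_sq_le
  have hnorm : m * ‖ξ‖ ^ 2 ≤ ‖Jmap q ξ‖ ^ 2 :=
    (mul_le_mul_of_nonneg_right hm (sq_nonneg _)).trans
      (min_one_sub_one_sq_mul_norm_sq_le h.symm.ne_zero ξ)
  have hmV : m * V ≤ V := mul_le_of_le_one_left hV (hm.trans (min_le_left _ _))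
  calc μ * m * (‖ξ‖ ^ 2 + V) = μ * (m * ‖ξ‖ ^ 2 + m * V) := by ring
    _ ≤ μ * (‖Jmap q ξ‖ ^ 2 + V) := mul_le_mul_of_nonneg_left (add_le_add hnorm hmV) hμ.le
    _ ≤ Gamma p A b c V (Jmap q ξ) := hΓ _
    _ = Gamma q Aᴴ c b V ξ := (Gamma_conjTranspose h A b c V ξ).symm

theorem stmt8 (d : ℕ) (hd : 1 ≤ d) (p q pstar : ℝ) (hp : 1 < p)
    (hq : q = p / (p - 1)) (hpstar : pstar = max p q)
    (A : Matrix (Fin d) (Fin d) ℂ) (b c : EuclideanSpace ℂ (Fin d))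
    (V μ : ℝ) (hV : 0 ≤ V) (hμ : 0 < μ)
    (hΓ : ∀ ξ : EuclideanSpace ℂ (Fin d), μ * (‖ξ‖ ^ 2 + V) ≤ Gamma p A b c V ξ) :
    ∀ ξ : EuclideanSpace ℂ (Fin d),
      μ * min 1 ((pstar - 1)⁻¹ ^ 2) * (‖ξ‖ ^ 2 + V) ≤ Gamma q A.conjTranspose c b V ξ :=
  stmt8_general d p q pstar hp hq hpstar A b c V μ hV hμ hΓ
end
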